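/- arXiv:2111.13306 — 3 statements merged into one kernel-verified Lean document; each statement's English description precedes it below -/
import Mathlib

section
/- Let (g,[·,·],[·,·]') be a compatible Lie algebra and (V,ρ,ρ') a representation of it, with Chevalley–Eilenberg differentials ∂ and ∂'. Let n ≥ 2 and let f, f': gⁿ → V be alternating n-linear maps satisfying ∂f = 0, ∂'f' = 0 and ∂f' + ∂'f = 0. Then the n-tuple (f, f+f', …, f+f', f') ∈ C^n_c(g,V), whose first entry is f, whose last entry is f', and whose n−2 middle entries all equal f+f', satisfies ∂_c(f, f+f', …, f+f', f') = 0, i.e. it is an n-cocycle of the compatible cochain complex. -/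
variable {K : Type*} [Field K] [CharZero K]
variable {g V : Type*} [AddCommGroup g] [Module K g] [AddCommGroup V] [Module K V]

/-- The Chevalley–Eilenberg differential on `n`-cochains `(Fin n → g) → V`. -/
def ceDiff (br : g → g → g) (ρ : g → Module.End K V) :
    (n : ℕ) → ((Fin n → g) → V) → ((Fin (n + 1) → g) → V)
  | 0, f => fun x => ρ (x 0) (f Fin.elim0)
  | n + 1, f => fun x =>
      (∑ i : Fin (n + 2), ((-1 : ℤ) ^ (i : ℕ)) • ρ (x i) (f (x ∘ i.succAbove))) +
      ∑ i : Fin (n + 2), ∑ j : Fin (n + 2),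
        if h : (i : ℕ) < (j : ℕ) then
          ((-1 : ℤ) ^ ((i : ℕ) + (j : ℕ))) •
            f (Fin.cons (br (x i) (x j)) (fun k : Fin n =>
              x (j.succAbove ((Fin.castLT i
                (lt_of_lt_of_le h (Nat.lt_succ_iff.mp j.isLt))).succAbove k))))
        else 0

/-- The differential of the compatible cochain complex:
`∂_c(f₁,…,fₙ) = (∂f₁, ∂f₂ + ∂'f₁, …, ∂fᵢ + ∂'f_{i−1}, …, ∂'fₙ)`. -/
def compDiff (br br' : g → g → g) (ρ ρ' : g → Module.End K V) (n : ℕ)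
    (F : Fin n → ((Fin n → g) → V)) : Fin (n + 1) → ((Fin (n + 1) → g) → V) :=
  fun i =>
    (if h : (i : ℕ) < n then ceDiff br ρ n (F ⟨(i : ℕ), h⟩) else 0) +
    (if h : 0 < (i : ℕ) then
        ceDiff br' ρ' n (F ⟨(i : ℕ) - 1, by have := i.isLt; omega⟩) else 0)

/-!
Both differentials are additive. Since `∂f = 0`, `∂` sees only the `f'`-part of every entry
but the first, and since `∂'f' = 0`, `∂'` sees only the `f`-part of every entry but the last.
Each middle component of `∂_c` is therefore `∂f' + ∂'f = 0`, while the two outer ones are `∂f`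
and `∂'f'`; `n ≥ 2` keeps the first and last entries distinct.
-/

omit [CharZero K] [AddCommGroup g] [Module K g] in
theorem ceDiff_add (br : g → g → g) (ρ : g → Module.End K V) (n : ℕ)
    (h h' : (Fin n → g) → V) :
    ceDiff br ρ n (h + h') = ceDiff br ρ n h + ceDiff br ρ n h' := by
  funext x
  cases n with
  | zero => simp [ceDiff]
  | succ m =>
    simp only [ceDiff, Pi.add_apply, map_add, smul_add, dite_add_dite, add_zero,
      add_add_add_comm, ← Finset.sum_add_distrib]

theorem stmt_4_general
    (B B' : g →ₗ[K] g →ₗ[K] g) (ρ ρ' : g →ₗ[K] Module.End K V)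
    (n : ℕ) (hn : 2 ≤ n) (f f' : AlternatingMap K g V (Fin n))
    (hf : ∀ x : Fin (n + 1) → g, ceDiff (fun u v => B u v) (fun u => ρ u) n ⇑f x = 0)
    (hf' : ∀ x : Fin (n + 1) → g, ceDiff (fun u v => B' u v) (fun u => ρ' u) n ⇑f' x = 0)
    (hff' : ∀ x : Fin (n + 1) → g,
      ceDiff (fun u v => B u v) (fun u => ρ u) n ⇑f' x
        + ceDiff (fun u v => B' u v) (fun u => ρ' u) n ⇑f x = 0)
    (i : Fin (n + 1)) (x : Fin (n + 1) → g) :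
    compDiff (fun u v => B u v) (fun u v => B' u v) (fun u => ρ u) (fun u => ρ' u) n
      (fun j => if (j : ℕ) = 0 then ⇑f else if (j : ℕ) = n - 1 then ⇑f' else ⇑f + ⇑f')
      i x = 0 := by
  rw [compDiff, Pi.add_apply]
  set d := ceDiff (fun u v => B u v) (fun u => ρ u) n
  set d' := ceDiff (fun u v => B' u v) (fun u => ρ' u) n
  have hdf : d ⇑f = 0 := funext hf
  have hd'f' : d' ⇑f' = 0 := funext hf'
  have hdF : ∀ j : ℕ, j ≠ 0 →
      d (if j = 0 then ⇑f else if j = n - 1 then ⇑f' else ⇑f + ⇑f') = d ⇑f' := by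
    intro j hj
    rw [if_neg hj]
    split_ifs <;> simp [d, ceDiff_add, hdf]
  have hd'F : ∀ j : ℕ, j ≠ n - 1 →
      d' (if j = 0 then ⇑f else if j = n - 1 then ⇑f' else ⇑f + ⇑f') = d' ⇑f := by
    intro j hj
    rw [if_neg hj]
    split_ifs <;> simp [d', ceDiff_add, hd'f']
  by_cases hfirst : (i : ℕ) = 0
  · rw [dif_pos (by omega), dif_neg (by omega)]
    simp [hfirst, hdf]
  by_cases hlast : (i : ℕ) = n
  · rw [dif_neg (by omega), dif_pos (by omega)]
    simp [hlast, show n - 1 ≠ 0 by omega, hd'f']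
  rw [dif_pos (by omega), dif_pos (by omega), hdF _ hfirst, hd'F ((i : ℕ) - 1) (by omega)]
  exact hff' x

/-- if `∂f = 0`, `∂'f' = 0` and `∂f' + ∂'f = 0` for alternating `n`-linear maps
`f, f' : gⁿ → V` with `n ≥ 2`, then the tuple `(f, f+f', …, f+f', f')` is an `n`-cocycle of
the compatible cochain complex. -/
theorem stmt_4
    (B B' : g →ₗ[K] g →ₗ[K] g) (ρ ρ' : g →ₗ[K] Module.End K V)
    (hBskew : ∀ x y : g, B x y = - B y x)
    (hB'skew : ∀ x y : g, B' x y = - B' y x)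
    (hBjac : ∀ x y z : g, B (B x y) z + B (B y z) x + B (B z x) y = 0)
    (hB'jac : ∀ x y z : g, B' (B' x y) z + B' (B' y z) x + B' (B' z x) y = 0)
    (hcompat : ∀ x y z : g, B (B' x y) z + B' (B x y) z
      = B (B' x z) y + B' (B x z) y + B x (B' y z) + B' x (B y z))
    (hρ : ∀ x y : g, ρ (B x y) = ρ x * ρ y - ρ y * ρ x)
    (hρ' : ∀ x y : g, ρ' (B' x y) = ρ' x * ρ' y - ρ' y * ρ' x)
    (hmix : ∀ x y : g, ρ (B' x y) + ρ' (B x y)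
      = ρ x * ρ' y - ρ' y * ρ x + ρ' x * ρ y - ρ y * ρ' x)
    (n : ℕ) (hn : 2 ≤ n) (f f' : AlternatingMap K g V (Fin n))
    (hf : ∀ x : Fin (n + 1) → g, ceDiff (fun u v => B u v) (fun u => ρ u) n ⇑f x = 0)
    (hf' : ∀ x : Fin (n + 1) → g, ceDiff (fun u v => B' u v) (fun u => ρ' u) n ⇑f' x = 0)
    (hff' : ∀ x : Fin (n + 1) → g,
      ceDiff (fun u v => B u v) (fun u => ρ u) n ⇑f' x
        + ceDiff (fun u v => B' u v) (fun u => ρ' u) n ⇑f x = 0)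
    (i : Fin (n + 1)) (x : Fin (n + 1) → g) :
    compDiff (fun u v => B u v) (fun u v => B' u v) (fun u => ρ u) (fun u => ρ' u) n
      (fun j => if (j : ℕ) = 0 then ⇑f else if (j : ℕ) = n - 1 then ⇑f' else ⇑f + ⇑f')
      i x = 0 :=
  stmt_4_general B B' ρ ρ' n hn f f' hf hf' hff' i x
end

section
/- Let g and V be vector spaces over a field of characteristic 0, let [·,·], [·,·]': g × g → g be skew-symmetric bilinear maps and ρ, ρ': g → End(V) linear maps. Define skew-symmetric bilinear maps Δ, Δ' on g ⊕ V with values in g ⊕ V by Δ((x,u),(y,v)) = ([x,y], ρ(x)v − ρ(y)u) and Δ'((x,u),(y,v)) = ([x,y]', ρ'(x)v − ρ'(y)u). Then (g,[·,·],[·,·]') is a compatible Lie algebra and (V,ρ,ρ') is a representation of it if and only if [Δ,Δ]_NR = 0, [Δ',Δ']_NR = 0 and [Δ,Δ']_NR = 0. -/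
/-!
Both `Δ` and `Δ'` are semidirect-product brackets, so the Nijenhuis–Richardson bracket of two such
brackets splits: its `g`-component is the bracket of the two structures on `g`, and its
`V`-component is linear in the `V`-arguments, with coefficients the polarized representation
defects. Evaluating at `(x,0), (y,0), (z,0)` and at `(x,0), (y,0), (0,w)` isolates both parts.
Finally, for skew brackets `[μ,μ]_NR` is twice the Jacobiator, `[μ,ν]_NR` is the compatibility
defect, and the self-defect of `ρ` is twice its failure to be a homomorphism; `2` is invertible
in characteristic zero.
-/

/-- The Nijenhuis–Richardson bracket of two (skew-symmetric) bilinear maps, as a trilinear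
map. -/
def nr3 {W : Type*} [AddCommGroup W] (μ ν : W → W → W) : W → W → W → W :=
  fun a b c =>
    μ (ν a b) c - μ (ν a c) b + μ (ν b c) a + ν (μ a b) c - ν (μ a c) b + ν (μ b c) a

section Identities

variable {R g V : Type*} [CommRing R] [AddCommGroup g] [Module R g] [AddCommGroup V] [Module R V]

-- Reducible, so that `rw` recognizes the literal brackets `Δ`, `Δ'` of the main theorem.
abbrev semidirectBracket (μ : g →ₗ[R] g →ₗ[R] g) (ρ : g →ₗ[R] Module.End R V) :
    g × V → g × V → g × V :=
  fun a b => (μ a.1 b.1, ρ a.1 b.2 - ρ b.1 a.2)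

/-- `(ρ, σ)` satisfies the mixed representation identity for `(μ, ν)` iff this vanishes. -/
def repDefect (μ ν : g →ₗ[R] g →ₗ[R] g) (ρ σ : g →ₗ[R] Module.End R V) (x y : g) :
    Module.End R V :=
  ρ (ν x y) + σ (μ x y) - (ρ x * σ y - σ y * ρ x + σ x * ρ y - ρ y * σ x)

theorem nr3_semidirectBracket (μ ν : g →ₗ[R] g →ₗ[R] g) (ρ σ : g →ₗ[R] Module.End R V)
    (x y z : g) (u v w : V) :
    nr3 (semidirectBracket μ ρ) (semidirectBracket ν σ) (x, u) (y, v) (z, w) =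
      (nr3 (μ · ·) (ν · ·) x y z,
        repDefect μ ν ρ σ x y w - repDefect μ ν ρ σ x z v + repDefect μ ν ρ σ y z u) := by
  simp only [nr3, semidirectBracket, repDefect, Prod.mk_sub_mk, Prod.mk_add_mk, Prod.mk.injEq,
    map_sub, LinearMap.sub_apply, LinearMap.add_apply, Module.End.mul_apply, true_and]
  module

theorem forall_nr3_semidirectBracket_eq_zero_iff (μ ν : g →ₗ[R] g →ₗ[R] g)
    (ρ σ : g →ₗ[R] Module.End R V) :
    (∀ p q r : g × V, nr3 (semidirectBracket μ ρ) (semidirectBracket ν σ) p q r = 0) ↔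
      (∀ x y z : g, nr3 (μ · ·) (ν · ·) x y z = 0) ∧ ∀ x y : g, repDefect μ ν ρ σ x y = 0 := by
  constructor
  · intro h
    refine ⟨fun x y z => ?_, fun x y => LinearMap.ext fun w => ?_⟩
    · simpa [nr3_semidirectBracket] using congr_arg Prod.fst (h (x, 0) (y, 0) (z, 0))
    · simpa [nr3_semidirectBracket] using congr_arg Prod.snd (h (x, 0) (y, 0) (0, w))
  · rintro ⟨hg, hV⟩ ⟨x, u⟩ ⟨y, v⟩ ⟨z, w⟩
    simp [nr3_semidirectBracket, hg, hV]

theorem nr3_self_eq_two_smul_jacobiator (μ : g →ₗ[R] g →ₗ[R] g) (hskew : ∀ x y, μ x y = -μ y x)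
    (x y z : g) :
    nr3 (μ · ·) (μ · ·) x y z = (2 : R) • (μ (μ x y) z + μ (μ y z) x + μ (μ z x) y) := by
  rw [hskew z x, map_neg, LinearMap.neg_apply]
  simp only [nr3]
  module

theorem nr3_eq_sub_of_skew (μ ν : g →ₗ[R] g →ₗ[R] g) (hμ : ∀ x y, μ x y = -μ y x)
    (hν : ∀ x y, ν x y = -ν y x) (x y z : g) :
    nr3 (μ · ·) (ν · ·) x y z = μ (ν x y) z + ν (μ x y) z -
      (μ (ν x z) y + ν (μ x z) y + μ x (ν y z) + ν x (μ y z)) := by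
  simp only [nr3, hμ (ν y z) x, hν (μ y z) x]
  module

theorem repDefect_self (μ : g →ₗ[R] g →ₗ[R] g) (ρ : g →ₗ[R] Module.End R V) (x y : g) :
    repDefect μ μ ρ ρ x y = (2 : R) • (ρ (μ x y) - (ρ x * ρ y - ρ y * ρ x)) := by
  simp only [repDefect]
  module

end Identities

section CharZero

variable {K g V : Type*} [Field K] [CharZero K] [AddCommGroup g] [Module K g] [AddCommGroup V]
  [Module K V]

theorem forall_nr3_self_eq_zero_iff (μ : g →ₗ[K] g →ₗ[K] g) (hskew : ∀ x y, μ x y = -μ y x) :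
    (∀ x y z, nr3 (μ · ·) (μ · ·) x y z = 0) ↔
      ∀ x y z, μ (μ x y) z + μ (μ y z) x + μ (μ z x) y = 0 := by
  simp only [nr3_self_eq_two_smul_jacobiator μ hskew,
    smul_eq_zero_iff_right (two_ne_zero : (2 : K) ≠ 0)]

theorem forall_repDefect_self_eq_zero_iff (μ : g →ₗ[K] g →ₗ[K] g) (ρ : g →ₗ[K] Module.End K V) :
    (∀ x y, repDefect μ μ ρ ρ x y = 0) ↔ ∀ x y, ρ (μ x y) = ρ x * ρ y - ρ y * ρ x := by
  simp only [repDefect_self, smul_eq_zero_iff_right (two_ne_zero : (2 : K) ≠ 0), sub_eq_zero]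

end CharZero

/-- `(g,B,B')` is a compatible Lie algebra with representation `(V,ρ,ρ')` iff
`[Δ,Δ]_NR = 0`, `[Δ',Δ']_NR = 0` and `[Δ,Δ']_NR = 0` on `g ⊕ V`. -/
theorem stmt_8 {K : Type*} [Field K] [CharZero K]
    {g V : Type*} [AddCommGroup g] [Module K g] [AddCommGroup V] [Module K V]
    (B B' : g →ₗ[K] g →ₗ[K] g) (ρ ρ' : g →ₗ[K] Module.End K V)
    (hBskew : ∀ x y : g, B x y = - B y x)
    (hB'skew : ∀ x y : g, B' x y = - B' y x) :
    ((∀ x y z : g, B (B x y) z + B (B y z) x + B (B z x) y = 0) ∧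
     (∀ x y z : g, B' (B' x y) z + B' (B' y z) x + B' (B' z x) y = 0) ∧
     (∀ x y z : g, B (B' x y) z + B' (B x y) z
        = B (B' x z) y + B' (B x z) y + B x (B' y z) + B' x (B y z)) ∧
     (∀ x y : g, ρ (B x y) = ρ x * ρ y - ρ y * ρ x) ∧
     (∀ x y : g, ρ' (B' x y) = ρ' x * ρ' y - ρ' y * ρ' x) ∧
     (∀ x y : g, ρ (B' x y) + ρ' (B x y)
        = ρ x * ρ' y - ρ' y * ρ x + ρ' x * ρ y - ρ y * ρ' x))
    ↔
    ((∀ p q r : g × V,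
        nr3 (fun a b : g × V => (B a.1 b.1, ρ a.1 b.2 - ρ b.1 a.2))
            (fun a b : g × V => (B a.1 b.1, ρ a.1 b.2 - ρ b.1 a.2)) p q r = 0) ∧
     (∀ p q r : g × V,
        nr3 (fun a b : g × V => (B' a.1 b.1, ρ' a.1 b.2 - ρ' b.1 a.2))
            (fun a b : g × V => (B' a.1 b.1, ρ' a.1 b.2 - ρ' b.1 a.2)) p q r = 0) ∧
     (∀ p q r : g × V,
        nr3 (fun a b : g × V => (B a.1 b.1, ρ a.1 b.2 - ρ b.1 a.2))
            (fun a b : g × V => (B' a.1 b.1, ρ' a.1 b.2 - ρ' b.1 a.2)) p q r = 0)) := by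
  rw [forall_nr3_semidirectBracket_eq_zero_iff, forall_nr3_semidirectBracket_eq_zero_iff,
    forall_nr3_semidirectBracket_eq_zero_iff, forall_nr3_self_eq_zero_iff B hBskew,
    forall_nr3_self_eq_zero_iff B' hB'skew, forall_repDefect_self_eq_zero_iff,
    forall_repDefect_self_eq_zero_iff]
  simp only [nr3_eq_sub_of_skew B B' hBskew hB'skew, sub_eq_zero, repDefect]
  tauto
end

section
/- Let (g, h, t, t', α, α') be a crossed module of compatible Lie algebras. Set L₋₁ = g and L₀ = h, and define l₁ = t, l₁' = t', l₂(x,y) = [x,y]_h, l₂'(x,y) = [x,y]'_h for x,y ∈ h, and l₂(x,m) = −l₂(m,x) := α(x,m), l₂'(x,m) = −l₂'(m,x) := α'(x,m) for x ∈ h, m ∈ g, together with l₃ = l₃' = 0. Then (L₋₁ ⊕ L₀, {l₁, l₂, 0}, {l₁', l₂', 0}) is a strict 2-term compatible L∞-algebra. -/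
variable {K : Type*} [Field K] [CharZero K]
variable {A M : Type*} [AddCommGroup A] [Module K A] [AddCommGroup M] [Module K M]

/-- A 2-term L∞-algebra structure on `L₋₁ ⊕ L₀` with `L₋₁ = A`, `L₀ = M`:
`d = l₁ : A → M`, `b = l₂ : M × M → M` (skew-symmetric), `a = l₂ : M × A → A` (with the
convention `l₂(h,x) = −l₂(x,h) = −a x h`), and `t = l₃ : M³ → A` (alternating), subject to
the axioms (L1)–(L5). -/
structure IsL2 (d : A →ₗ[K] M) (b : M →ₗ[K] M →ₗ[K] M)
    (a : M →ₗ[K] A →ₗ[K] A) (t : M →ₗ[K] M →ₗ[K] M →ₗ[K] A) : Prop where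
  b_skew : ∀ x y : M, b x y = - b y x
  t_skew12 : ∀ x y z : M, t x y z = - t y x z
  t_skew23 : ∀ x y z : M, t x y z = - t x z y
  L1 : ∀ (x : M) (h : A), d (a x h) = b x (d h)
  L2 : ∀ h k : A, a (d h) k = - a (d k) h
  L3 : ∀ x y z : M, d (t x y z) = - b (b x y) z + b (b x z) y + b x (b y z)
  L4 : ∀ (h : A) (x y : M),
    t (d h) x y = - a (b x y) h - a y (a x h) + a x (a y h)
  L5 : ∀ w x y z : M,
    - a z (t w x y) - a x (t w y z) + a y (t w x z) + a w (t x y z)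
      = t (b w x) y z - t (b w y) x z + t (b w z) x y
        + t (b x y) w z - t (b x z) w y + t (b y z) w x

/-- The compatibility conditions (C1)–(C5) between two 2-term L∞-algebra structures
`(d,b,a,t)` and `(d',b',a',t')` on `L₋₁ ⊕ L₀` (with the convention
`l₂(h,x) = −a x h`, `l₂'(h,x) = −a' x h`). -/
structure IsCompat2 (d d' : A →ₗ[K] M) (b b' : M →ₗ[K] M →ₗ[K] M)
    (a a' : M →ₗ[K] A →ₗ[K] A) (t t' : M →ₗ[K] M →ₗ[K] M →ₗ[K] A) : Prop where
  C1 : ∀ (x : M) (h : A), d (a' x h) + d' (a x h) = b x (d' h) + b' x (d h)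
  C2 : ∀ h k : A, a (d' h) k + a' (d h) k = - a (d' k) h - a' (d k) h
  C3 : ∀ x y z : M, d (t' x y z) + d' (t x y z)
    = - b (b' x y) z - b' (b x y) z + b (b' x z) y + b' (b x z) y
      + b x (b' y z) + b' x (b y z)
  C4 : ∀ (h : A) (x y : M),
    t (d' h) x y + t' (d h) x y
      = - a (b' x y) h - a' (b x y) h - a y (a' x h) - a' y (a x h)
        + a x (a' y h) + a' x (a y h)
  C5 : ∀ w x y z : M,
    - a z (t' w x y) - a' z (t w x y) - a x (t' w y z) - a' x (t w y z)
      + a y (t' w x z) + a' y (t w x z) + a w (t' x y z) + a' w (t x y z)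
      = t (b' w x) y z + t' (b w x) y z - t (b' w y) x z - t' (b w y) x z
        + t (b' w z) x y + t' (b w z) x y + t (b' x y) w z + t' (b x y) w z
        - t (b' x z) w y - t' (b x z) w y + t (b' y z) w x + t' (b y z) w x

/-- A compatible Lie algebra structure: two skew-symmetric brackets, each satisfying the
Jacobi identity, satisfying the compatibility condition. -/
structure IsCompatLie {X : Type*} [AddCommGroup X] [Module K X]
    (B B' : X →ₗ[K] X →ₗ[K] X) : Prop where
  skew : ∀ x y : X, B x y = - B y x
  skew' : ∀ x y : X, B' x y = - B' y x
  jacobi : ∀ x y z : X, B (B x y) z + B (B y z) x + B (B z x) y = 0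
  jacobi' : ∀ x y z : X, B' (B' x y) z + B' (B' y z) x + B' (B' z x) y = 0
  compat : ∀ x y z : X, B (B' x y) z + B' (B x y) z
    = B (B' x z) y + B' (B x z) y + B x (B' y z) + B' x (B y z)

/-- A crossed module of compatible Lie algebras: compatible Lie algebras
`(A, bA, bA')` and `(M, bM, bM')`, Lie algebra homomorphisms `tm : (A,bA) → (M,bM)` and
`tm' : (A,bA') → (M,bM')`, and bilinear maps `α, α' : M × A → A` satisfying (i)–(iv). -/
structure IsCrossedModule (bA bA' : A →ₗ[K] A →ₗ[K] A) (bM bM' : M →ₗ[K] M →ₗ[K] M)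
    (tm tm' : A →ₗ[K] M) (α α' : M →ₗ[K] A →ₗ[K] A) : Prop where
  compatA : IsCompatLie bA bA'
  compatM : IsCompatLie bM bM'
  t_hom : ∀ m n : A, tm (bA m n) = bM (tm m) (tm n)
  t'_hom : ∀ m n : A, tm' (bA' m n) = bM' (tm' m) (tm' n)
  i1 : ∀ (x : M) (m : A), tm (α x m) = bM x (tm m)
  i2 : ∀ (x : M) (m : A), tm' (α' x m) = bM' x (tm' m)
  i3 : ∀ (x : M) (m : A), tm (α' x m) + tm' (α x m) = bM x (tm' m) + bM' x (tm m)
  ii1 : ∀ m n : A, α (tm m) n = bA m n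
  ii2 : ∀ m n : A, α' (tm' m) n = bA' m n
  ii3 : ∀ m n : A, α (tm' m) n + α' (tm m) n = - α (tm' n) m - α' (tm n) m
  iii1 : ∀ (x : M) (m n : A), α x (bA m n) = bA (α x m) n + bA m (α x n)
  iii2 : ∀ (x : M) (m n : A), α' x (bA' m n) = bA' (α' x m) n + bA' m (α' x n)
  iii3 : ∀ (x : M) (m n : A), α x (bA' m n) + α' x (bA m n)
    = bA' (α x m) n + bA (α' x m) n + bA' m (α x n) + bA m (α' x n)
  iv1 : ∀ (x y : M) (m : A), α (bM x y) m = α x (α y m) - α y (α x m)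
  iv2 : ∀ (x y : M) (m : A), α' (bM' x y) m = α' x (α' y m) - α' y (α' x m)
  iv3 : ∀ (x y : M) (m : A), α (bM' x y) m + α' (bM x y) m
    = α x (α' y m) + α' x (α y m) - α y (α' x m) - α' y (α x m)

/-! With `l₃ = l₃' = 0` the homotopy-Jacobi conditions collapse to strict identities: (L3) is the
Jacobi identity of the bracket on `L₀`, (L4) says that `l₂` restricted to `L₀ × L₋₁` is a
representation, and (L5), (C5) hold trivially. For a crossed module these are the Jacobi
identities, (iv), (i) and the Peiffer identity (ii); on the compatibility side (C3) is the
compatibility of the two brackets on `L₀` and (C4) is the mixed representation condition. -/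

section Strict

variable {F V W : Type*} [Field F] [AddCommGroup V] [Module F V] [AddCommGroup W] [Module F W]

theorem isL2_zero (d : V →ₗ[F] W) (b : W →ₗ[F] W →ₗ[F] W) (a : W →ₗ[F] V →ₗ[F] V)
    (skew : ∀ x y : W, b x y = - b y x)
    (jacobi : ∀ x y z : W, b (b x y) z + b (b y z) x + b (b z x) y = 0)
    (equivariant : ∀ (x : W) (h : V), d (a x h) = b x (d h))
    (peiffer : ∀ h k : V, a (d h) k = - a (d k) h)
    (representation : ∀ (x y : W) (h : V), a (b x y) h = a x (a y h) - a y (a x h)) :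
    IsL2 d b a 0 := by
  refine ⟨skew, by simp, by simp, equivariant, peiffer, fun x y z => ?_, fun h x y => ?_,
    by simp⟩
  · have hxz : b (b x z) y = - b (b z x) y := by rw [skew x z, map_neg, LinearMap.neg_apply]
    simp only [LinearMap.zero_apply, map_zero]
    rw [hxz, skew x (b y z)]
    linear_combination (norm := abel1) jacobi x y z
  · simp only [LinearMap.zero_apply, representation]
    abel

theorem isCompat2_zero (d d' : V →ₗ[F] W) (b b' : W →ₗ[F] W →ₗ[F] W)
    (a a' : W →ₗ[F] V →ₗ[F] V)
    (equivariant : ∀ (x : W) (h : V), d (a' x h) + d' (a x h) = b x (d' h) + b' x (d h))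
    (peiffer : ∀ h k : V, a (d' h) k + a' (d h) k = - a (d' k) h - a' (d k) h)
    (compat : ∀ x y z : W, b (b' x y) z + b' (b x y) z
      = b (b' x z) y + b' (b x z) y + b x (b' y z) + b' x (b y z))
    (representation : ∀ (x y : W) (h : V), a (b' x y) h + a' (b x y) h
      = a x (a' y h) + a' x (a y h) - a y (a' x h) - a' y (a x h)) :
    IsCompat2 d d' b b' a a' 0 0 := by
  refine ⟨equivariant, peiffer, fun x y z => ?_, fun h x y => ?_, by simp⟩
  · simp only [LinearMap.zero_apply, map_zero, add_zero]
    linear_combination (norm := abel1) compat x y z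
  · simp only [LinearMap.zero_apply, add_zero]
    linear_combination (norm := abel1) representation x y h

theorem peiffer_of_apply_eq_bracket {B : V →ₗ[F] V →ₗ[F] V} (skew : ∀ m n : V, B m n = - B n m)
    {d : V →ₗ[F] W} {a : W →ₗ[F] V →ₗ[F] V} (hB : ∀ m n : V, a (d m) n = B m n) (h k : V) :
    a (d h) k = - a (d k) h := by
  rw [hB, hB, skew]

end Strict

/-- a crossed module of compatible Lie algebras gives rise to a strict 2-term
compatible L∞-algebra with `l₁ = tm`, `l₁' = tm'`, `l₂ = bM` and `α` on mixed arguments,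
`l₂' = bM'` and `α'` on mixed arguments, and `l₃ = l₃' = 0`. -/
theorem stmt_13 (bA bA' : A →ₗ[K] A →ₗ[K] A) (bM bM' : M →ₗ[K] M →ₗ[K] M)
    (tm tm' : A →ₗ[K] M) (α α' : M →ₗ[K] A →ₗ[K] A)
    (hX : IsCrossedModule bA bA' bM bM' tm tm' α α') :
    IsL2 tm bM α 0 ∧ IsL2 tm' bM' α' 0 ∧ IsCompat2 tm tm' bM bM' α α' 0 0 :=
  ⟨isL2_zero tm bM α hX.compatM.skew hX.compatM.jacobi hX.i1
      (peiffer_of_apply_eq_bracket hX.compatA.skew hX.ii1) hX.iv1,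
    isL2_zero tm' bM' α' hX.compatM.skew' hX.compatM.jacobi' hX.i2
      (peiffer_of_apply_eq_bracket hX.compatA.skew' hX.ii2) hX.iv2,
    isCompat2_zero tm tm' bM bM' α α' hX.i3 hX.ii3 hX.compatM.compat hX.iv3⟩
end
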